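/- Let W_n ⊆ V_n be the K-submodule spanned by basis elements ((y1,...,yn),(x1,...,xn)) for which there is some i ∈ {1,...,n−1} with y_i = y_{i+1} and x_i = x_{i+1}. Then l_n(W_n) ⊆ W_{n−1} and r_n(W_n) ⊆ W_{n−1} for all n ≥ 1. -/

import Mathlib

/-!
A degenerate generator has equal entries at two adjacent positions `i`, `i + 1`. Each face
map `ρ_k` or `λ_k` with `k ∉ {i, i + 1}` keeps such an adjacent equal pair, so its value is
again degenerate. The `i`-th and `(i + 1)`-st faces produce the same tuple and enter the
alternating sum with opposite signs, so they cancel. For `λ` this rests on writing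
`λ_k = ρ_k ∘ a_k`, where `a_k` acts on the entries before `k` by the `k`-th entry: since
`x * x = x` and `y *_x^x y = y`, the maps `a_i` and `a_{i+1}` agree on such a tuple.
-/

namespace Stmt10

variable {X Y : Type*}

/-- The free `K`-module `V_n` on tuples in `Y^n × X^n`. -/
abbrev V (K : Type*) [CommRing K] (X Y : Type*) (n : ℕ) : Type _ :=
  ((Fin n → Y) × (Fin n → X)) →₀ K

/-- `λ_{n,i}` on generators: act on the entries before `i` by the `i`-th entry
and delete the `i`-th entry. -/
def lamTup (qop : X → X → X) (hop : X → X → Y → Y → Y) {n : ℕ} (i : Fin (n + 1))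
    (t : (Fin (n + 1) → Y) × (Fin (n + 1) → X)) : (Fin n → Y) × (Fin n → X) :=
  (fun j => if (j : ℕ) < (i : ℕ)
      then hop (t.2 j.castSucc) (t.2 i) (t.1 j.castSucc) (t.1 i)
      else t.1 j.succ,
   fun j => if (j : ℕ) < (i : ℕ) then qop (t.2 j.castSucc) (t.2 i) else t.2 j.succ)

/-- `ρ_{n,i}` on generators: delete the `i`-th entries of both tuples. -/
def rhoTup {n : ℕ} (i : Fin (n + 1))
    (t : (Fin (n + 1) → Y) × (Fin (n + 1) → X)) : (Fin n → Y) × (Fin n → X) :=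
  (fun j => t.1 (i.succAbove j), fun j => t.2 (i.succAbove j))

/-- The linear map `λ_{n,i} : V_{n+1} → V_n`. -/
noncomputable def lamMap (K : Type*) [CommRing K] (qop : X → X → X)
    (hop : X → X → Y → Y → Y) (n : ℕ) (i : Fin (n + 1)) :
    V K X Y (n + 1) →ₗ[K] V K X Y n :=
  Finsupp.lmapDomain K K (lamTup qop hop i)

/-- The linear map `ρ_{n,i} : V_{n+1} → V_n`. -/
noncomputable def rhoMap (K : Type*) [CommRing K] (n : ℕ) (i : Fin (n + 1)) :
    V K X Y (n + 1) →ₗ[K] V K X Y n :=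
  Finsupp.lmapDomain K K (rhoTup i)

/-- `l_n = Σ_i (-1)^{i+1} λ_{n,i}` (written with `0`-based indices). -/
noncomputable def lMap (K : Type*) [CommRing K] (qop : X → X → X)
    (hop : X → X → Y → Y → Y) (n : ℕ) : V K X Y (n + 1) →ₗ[K] V K X Y n :=
  ∑ i : Fin (n + 1), ((-1 : K) ^ (i : ℕ)) • lamMap K qop hop n i

/-- `r_n = Σ_i (-1)^{i+1} ρ_{n,i}` (written with `0`-based indices). -/
noncomputable def rMap (K : Type*) [CommRing K] (n : ℕ) :
    V K X Y (n + 1) →ₗ[K] V K X Y n :=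
  ∑ i : Fin (n + 1), ((-1 : K) ^ (i : ℕ)) • rhoMap (X := X) (Y := Y) K n i

/-- A tuple is degenerate if some two consecutive entries agree in both
the `Y`- and the `X`-component. -/
def Degenerate {n : ℕ} (t : (Fin n → Y) × (Fin n → X)) : Prop :=
  ∃ i j : Fin n, (i : ℕ) + 1 = (j : ℕ) ∧ t.1 i = t.1 j ∧ t.2 i = t.2 j

/-- The submodule `W_n ⊆ V_n` spanned by the degenerate generators. -/
noncomputable def W (K : Type*) [CommRing K] (X Y : Type*) (n : ℕ) :
    Submodule K (V K X Y n) :=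
  Submodule.span K
    {f | ∃ t : (Fin n → Y) × (Fin n → X), Degenerate t ∧ f = Finsupp.single t 1}

lemma val_succAbove {n : ℕ} (k : Fin (n + 1)) (m : Fin n) :
    (k.succAbove m : ℕ) = if (m : ℕ) < k then (m : ℕ) else m + 1 := by
  unfold Fin.succAbove
  split_ifs <;> simp_all [Fin.lt_def]

theorem alternating_sum_mem_of_adjacent_eq {K M : Type*} [Ring K] [AddCommGroup M] [Module K M]
    (S : Submodule K M) {n : ℕ} (v : Fin (n + 1) → M) {i j : Fin (n + 1)}
    (hij : (i : ℕ) + 1 = j) (hS : ∀ k, k ≠ i → k ≠ j → v k ∈ S) (hv : v i = v j) :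
    ∑ k : Fin (n + 1), (-1 : K) ^ (k : ℕ) • v k ∈ S := by
  classical
  have hne : i ≠ j := fun h => by rw [h] at hij; omega
  rw [← Finset.sum_sdiff (Finset.subset_univ {i, j}), Finset.sum_pair hne, hv, ← add_smul,
    ← hij, pow_succ, mul_neg_one, add_neg_cancel, zero_smul, add_zero]
  refine S.sum_mem fun k hk => S.smul_mem _ (hS k ?_ ?_) <;>
    simp_all

def actBefore (qop : X → X → X) (hop : X → X → Y → Y → Y) {m : ℕ} (k : Fin m)
    (t : (Fin m → Y) × (Fin m → X)) : (Fin m → Y) × (Fin m → X) :=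
  (fun p => if p < k then hop (t.2 p) (t.2 k) (t.1 p) (t.1 k) else t.1 p,
   fun p => if p < k then qop (t.2 p) (t.2 k) else t.2 p)

section Faces

variable {n : ℕ} {t : (Fin (n + 1) → Y) × (Fin (n + 1) → X)} {i j k : Fin (n + 1)}

theorem rhoTup_eq_of_adjacent (hij : (i : ℕ) + 1 = j) (hy : t.1 i = t.1 j) (hx : t.2 i = t.2 j) :
    rhoTup i t = rhoTup j t := by
  suffices h : ∀ m, t.1 (i.succAbove m) = t.1 (j.succAbove m) ∧
      t.2 (i.succAbove m) = t.2 (j.succAbove m) from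
    Prod.ext (funext fun m => (h m).1) (funext fun m => (h m).2)
  intro m
  by_cases hm : (m : ℕ) = i
  · -- deleting `i` or `j` leaves the other one at position `m`
    have hi : i.succAbove m = j := Fin.ext (by rw [val_succAbove]; split_ifs <;> omega)
    have hj : j.succAbove m = i := Fin.ext (by rw [val_succAbove]; split_ifs <;> omega)
    rw [hi, hj]
    exact ⟨hy.symm, hx.symm⟩
  · have h : i.succAbove m = j.succAbove m :=
      Fin.ext (by rw [val_succAbove, val_succAbove]; split_ifs <;> omega)
    rw [h]
    exact ⟨rfl, rfl⟩

theorem degenerate_rhoTup (hij : (i : ℕ) + 1 = j) (hy : t.1 i = t.1 j) (hx : t.2 i = t.2 j)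
    (hki : k ≠ i) (hkj : k ≠ j) : Degenerate (rhoTup k t) := by
  obtain ⟨i', rfl⟩ := Fin.exists_succAbove_eq hki.symm
  obtain ⟨j', rfl⟩ := Fin.exists_succAbove_eq hkj.symm
  refine ⟨i', j', ?_, hy, hx⟩
  rw [val_succAbove, val_succAbove] at hij
  have hi' := Fin.ne_succAbove k i'
  have hj' := Fin.ne_succAbove k j'
  split_ifs at hij <;> simp_all [Fin.ext_iff, val_succAbove] <;> omega

variable (qop : X → X → X) (hop : X → X → Y → Y → Y)

theorem lamTup_eq_rhoTup_actBefore :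
    lamTup qop hop k t = rhoTup k (actBefore qop hop k t) := by
  have h : ∀ m : Fin n, (k.succAbove m < k ↔ (m : ℕ) < k) ∧
      k.succAbove m = if (m : ℕ) < k then m.castSucc else m.succ := fun m => by
    constructor
    · rw [Fin.lt_def, val_succAbove]; split_ifs <;> omega
    · split_ifs <;> ext <;> simp [val_succAbove, *]
  ext m <;> simp only [lamTup, rhoTup, actBefore, (h m).1] <;> rw [(h m).2] <;> split_ifs <;> rfl

theorem actBefore_adjacent (hij : (i : ℕ) + 1 = j) (hy : t.1 i = t.1 j) (hx : t.2 i = t.2 j)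
    (hkj : k ≠ j) :
    (actBefore qop hop k t).1 i = (actBefore qop hop k t).1 j ∧
      (actBefore qop hop k t).2 i = (actBefore qop hop k t).2 j := by
  have h : i < k ↔ j < k := by
    rw [Fin.lt_def, Fin.lt_def]
    have := Fin.val_ne_of_ne hkj
    omega
  simp only [actBefore, h, hy, hx, and_self]

theorem actBefore_eq_of_adjacent (qidem : ∀ x, qop x x = x) (hidem : ∀ x y, hop x x y y = y)
    (hij : (i : ℕ) + 1 = j) (hy : t.1 i = t.1 j) (hx : t.2 i = t.2 j) :
    actBefore qop hop i t = actBefore qop hop j t := by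
  have h : ∀ p : Fin (n + 1), p < j ↔ p < i ∨ p = i := fun p => by
    simp only [Fin.lt_def, Fin.ext_iff]; omega
  ext p <;> simp only [actBefore, h] <;> obtain hp | rfl | hp := lt_trichotomy p i <;>
    simp_all [lt_asymm, ne_of_gt]

theorem degenerate_lamTup (hij : (i : ℕ) + 1 = j) (hy : t.1 i = t.1 j) (hx : t.2 i = t.2 j)
    (hki : k ≠ i) (hkj : k ≠ j) : Degenerate (lamTup qop hop k t) := by
  obtain ⟨hy', hx'⟩ := actBefore_adjacent qop hop hij hy hx hkj
  rw [lamTup_eq_rhoTup_actBefore]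
  exact degenerate_rhoTup hij hy' hx' hki hkj

theorem lamTup_eq_of_adjacent (qidem : ∀ x, qop x x = x) (hidem : ∀ x y, hop x x y y = y)
    (hij : (i : ℕ) + 1 = j) (hy : t.1 i = t.1 j) (hx : t.2 i = t.2 j) :
    lamTup qop hop i t = lamTup qop hop j t := by
  have hne : i ≠ j := fun h => by rw [h] at hij; omega
  obtain ⟨hy', hx'⟩ := actBefore_adjacent qop hop hij hy hx hne
  rw [lamTup_eq_rhoTup_actBefore, lamTup_eq_rhoTup_actBefore, rhoTup_eq_of_adjacent hij hy' hx',
    actBefore_eq_of_adjacent qop hop qidem hidem hij hy hx]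

end Faces

theorem map_alternating_lmapDomain_le_W (K : Type*) [CommRing K] {n : ℕ}
    (f : Fin (n + 1) → (Fin (n + 1) → Y) × (Fin (n + 1) → X) → (Fin n → Y) × (Fin n → X))
    (hdeg : ∀ t (i j k : Fin (n + 1)), (i : ℕ) + 1 = j → t.1 i = t.1 j → t.2 i = t.2 j →
      k ≠ i → k ≠ j → Degenerate (f k t))
    (heq : ∀ t (i j : Fin (n + 1)), (i : ℕ) + 1 = j → t.1 i = t.1 j → t.2 i = t.2 j →
      f i t = f j t) :
    Submodule.map (∑ k : Fin (n + 1), (-1 : K) ^ (k : ℕ) • Finsupp.lmapDomain K K (f k))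
      (W K X Y (n + 1)) ≤ W K X Y n := by
  rw [Submodule.map_le_iff_le_comap, W, Submodule.span_le]
  rintro _ ⟨t, ⟨i, j, hij, hy, hx⟩, rfl⟩
  simp only [SetLike.mem_coe, Submodule.mem_comap, LinearMap.sum_apply,
    LinearMap.smul_apply, Finsupp.lmapDomain_apply, Finsupp.mapDomain_single]
  refine alternating_sum_mem_of_adjacent_eq _ (fun k => Finsupp.single (f k t) 1) hij
    (fun k hki hkj => Submodule.subset_span ⟨f k t, hdeg t i j k hij hy hx hki hkj, rfl⟩)
    (by rw [heq t i j hij hy hx])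

theorem degenerate_submodule_stable_general (K : Type*) [CommRing K] (qop : X → X → X) (hop : X → X → Y → Y → Y)
    (qidem : ∀ x, qop x x = x)
    (hidem : ∀ x y, hop x x y y = y)
    (n : ℕ) :
    Submodule.map (lMap K qop hop n) (W K X Y (n + 1)) ≤ W K X Y n ∧
    Submodule.map (rMap (X := X) (Y := Y) K n) (W K X Y (n + 1)) ≤ W K X Y n :=
  ⟨map_alternating_lmapDomain_le_W K _
      (fun _ _ _ _ hij hy hx hki hkj => degenerate_lamTup qop hop hij hy hx hki hkj)
      (fun _ _ _ hij hy hx => lamTup_eq_of_adjacent qop hop qidem hidem hij hy hx),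
    map_alternating_lmapDomain_le_W K _
      (fun _ _ _ _ hij hy hx hki hkj => degenerate_rhoTup hij hy hx hki hkj)
      (fun _ _ _ hij hy hx => rhoTup_eq_of_adjacent hij hy hx)⟩

/-- `l_n(W_n) ⊆ W_{n−1}` and `r_n(W_n) ⊆ W_{n−1}` for `n ≥ 1`. -/
theorem degenerate_submodule_stable (K : Type*) [CommRing K] (qop : X → X → X) (hop : X → X → Y → Y → Y)
    (qidem : ∀ x, qop x x = x)
    (qbij : ∀ a, Function.Bijective fun x => qop x a)
    (qdistrib : ∀ x1 x2 x3, qop (qop x1 x2) x3 = qop (qop x1 x3) (qop x2 x3))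
    (hidem : ∀ x y, hop x x y y = y)
    (hbij : ∀ x1 x2 (a : Y), Function.Bijective fun y => hop x1 x2 y a)
    (hdistrib : ∀ x1 x2 x3 (y1 y2 y3 : Y),
      hop (qop x1 x2) x3 (hop x1 x2 y1 y2) y3 =
        hop (qop x1 x3) (qop x2 x3) (hop x1 x3 y1 y3) (hop x2 x3 y2 y3))
    (n : ℕ) :
    Submodule.map (lMap K qop hop n) (W K X Y (n + 1)) ≤ W K X Y n ∧
    Submodule.map (rMap (X := X) (Y := Y) K n) (W K X Y (n + 1)) ≤ W K X Y n :=
  degenerate_submodule_stable_general K qop hop qidem hidem n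

end Stmt10
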